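/- For every real x > 0, every real λ > 0, and every integer N ≥ 2, one has p_N·λ < ln(1 + p_N·(e^λ − 1)) < G_N/N < p_N·λ + (1 − p_N)·N·λ²/2. -/

import Mathlib

/-!
With `c := p_N ∈ (0, 1)` (which needs `tanh x < x`, i.e. `sinh x < x cosh x`, by the mean value
theorem), `1 + c (e^t - 1)` is the moment generating function of a Bernoulli(`c`) variable.
The first inequality is strict convexity of `exp`, the second strict convexity of `y ↦ y ^ N`
applied to the points `1` and `e^λ`, and the last one (at `t = Nλ`) follows by comparing
derivatives: `c e^t / (1 + c (e^t - 1)) < c + (1 - c) t` for `t > 0`.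
-/

open Real Set

lemma add_one_sub_div_mem_Ioo {K : Type*} [Field K] [LinearOrder K] [IsStrictOrderedRing K]
    {p n : K} (hp : p ∈ Ioo 0 1) (hn : 1 < n) : p + (1 - p) / n ∈ Ioo 0 1 := by
  have hq : 0 < 1 - p := sub_pos.2 hp.2
  have hqn : (1 - p) / n < 1 - p := div_lt_self hq hn
  constructor
  · linarith [hp.1, div_pos hq (zero_lt_one.trans hn)]
  · linarith

namespace Real

lemma sinh_lt_mul_cosh {x : ℝ} (hx : 0 < x) : sinh x < x * cosh x := by
  obtain ⟨ξ, hξ, hslope⟩ := exists_deriv_eq_slope sinh hx continuous_sinh.continuousOn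
    differentiable_sinh.differentiableOn
  rw [deriv_sinh, sinh_zero, sub_zero, sub_zero, eq_div_iff hx.ne'] at hslope
  have hcosh : cosh ξ < cosh x := cosh_lt_cosh.2 <| by
    rw [abs_of_pos hξ.1, abs_of_pos hx]; exact hξ.2
  rw [← hslope, mul_comm]
  exact mul_lt_mul_of_pos_left hcosh hx

lemma tanh_pos {x : ℝ} (hx : 0 < x) : 0 < tanh x := by
  rw [tanh_eq_sinh_div_cosh]
  exact div_pos (sinh_pos_iff.2 hx) (cosh_pos x)

lemma tanh_div_self_lt_one {x : ℝ} (hx : 0 < x) : tanh x / x < 1 := by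
  rw [div_lt_one hx, tanh_eq_sinh_div_cosh, div_lt_iff₀ (cosh_pos x)]
  exact sinh_lt_mul_cosh hx

lemma one_sub_tanh_sq_add_tanh_div_self_div_two_mem_Ioo {x : ℝ} (hx : 0 < x) :
    (1 - tanh x ^ 2 + tanh x / x) / 2 ∈ Ioo 0 1 := by
  have hm0 : 0 < tanh x / x := div_pos (tanh_pos hx) hx
  constructor <;> nlinarith [tanh_sq_lt_one x, tanh_div_self_lt_one hx, sq_nonneg (tanh x)]

variable {c t : ℝ}

lemma mul_lt_log_one_add_mul_exp_sub_one (hc0 : 0 < c) (hc1 : c < 1) (ht : t ≠ 0) :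
    c * t < log (1 + c * (exp t - 1)) := by
  have hjensen := strictConvexOn_exp.2 (mem_univ 0) (mem_univ t) ht.symm
    (sub_pos.2 hc1) hc0 (by ring)
  simp only [smul_eq_mul, mul_zero, zero_add, exp_zero, mul_one] at hjensen
  rw [lt_log_iff_exp_lt (by linarith [exp_pos (c * t)])]
  linarith

lemma one_add_mul_exp_sub_one_pow_lt (hc0 : 0 < c) (hc1 : c < 1) (ht : t ≠ 0) {n : ℕ}
    (hn : 2 ≤ n) : (1 + c * (exp t - 1)) ^ n < 1 + c * (exp (n * t) - 1) := by
  have hjensen := (strictConvexOn_pow hn).2 (mem_Ici.2 zero_le_one)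
    (mem_Ici.2 (exp_pos t).le) (by rwa [ne_comm, Ne, exp_eq_one_iff]) (sub_pos.2 hc1) hc0
    (by ring)
  simp only [smul_eq_mul, mul_one, one_pow] at hjensen
  rw [exp_nat_mul]
  calc (1 + c * (exp t - 1)) ^ n = (1 - c + c * exp t) ^ n := by ring
    _ < 1 - c + c * exp t ^ n := hjensen
    _ = 1 + c * (exp t ^ n - 1) := by ring

lemma mul_exp_div_one_add_mul_exp_sub_one_lt (hc0 : 0 ≤ c) (hc1 : c < 1) (ht : 0 < t) :
    c * exp t / (1 + c * (exp t - 1)) < c + (1 - c) * t := by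
  have hpos : 0 < 1 + c * (exp t - 1) := by nlinarith [exp_pos t]
  -- the gap times the denominator is `(1 - c) * (c * (1 - (1 - t) * exp t) + (1 - c) * t)`
  have hexp : (1 - t) * exp t < 1 := by
    have := add_one_lt_exp (neg_ne_zero.2 ht.ne')
    calc (1 - t) * exp t < exp (-t) * exp t := by gcongr; linarith
      _ = 1 := by rw [← exp_add, neg_add_cancel, exp_zero]
  rw [div_lt_iff₀ hpos]
  nlinarith [mul_pos (mul_pos (sub_pos.2 hc1) (sub_pos.2 hc1)) ht,
    mul_nonneg (mul_nonneg hc0 (sub_pos.2 hc1).le) (sub_pos.2 hexp).le]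

lemma log_one_add_mul_exp_sub_one_lt (hc0 : 0 ≤ c) (hc1 : c < 1) (ht : 0 < t) :
    log (1 + c * (exp t - 1)) < c * t + (1 - c) * t ^ 2 / 2 := by
  have hpos : ∀ s, 0 < 1 + c * (exp s - 1) := fun s => by nlinarith [exp_pos s]
  set g : ℝ → ℝ := fun s => c * s + (1 - c) * s ^ 2 / 2 - log (1 + c * (exp s - 1))
  have hg : ∀ s, HasDerivAt g (c + (1 - c) * s - c * exp s / (1 + c * (exp s - 1))) s := by
    intro s
    have hpoly := ((hasDerivAt_id s).const_mul c).add
      (((hasDerivAt_pow 2 s).const_mul (1 - c)).div_const 2)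
    have hlog := ((((hasDerivAt_exp s).sub_const 1).const_mul c).const_add 1).log (hpos s).ne'
    exact (hpoly.sub hlog).congr_deriv (by push_cast; ring)
  have hmono : StrictMonoOn g (Ici 0) := by
    refine strictMonoOn_of_deriv_pos (convex_Ici 0)
      (HasDerivAt.continuousOn fun s _ => hg s) fun s hs => ?_
    rw [interior_Ici, mem_Ioi] at hs
    rw [(hg s).deriv, sub_pos]
    exact mul_exp_div_one_add_mul_exp_sub_one_lt hc0 hc1 hs
  have hg0 : g 0 = 0 := by simp [g]
  exact sub_pos.1 (hg0 ▸ hmono self_mem_Ici (mem_Ici.2 ht.le) ht)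

end Real

/-- For every `x > 0`, `λ > 0` and integer `N ≥ 2`, with
`m := tanh x / x`, `p := (1 - tanh x ^ 2 + m)/2`, `p_N := p + (1-p)/N` and
`G_N := ln(1 + p_N (e^{Nλ} - 1))`, one has
`p_N λ < ln(1 + p_N (e^λ - 1)) < G_N / N < p_N λ + (1 - p_N) N λ² / 2`. -/
theorem stmt1 (x lam : ℝ) (hx : 0 < x) (hlam : 0 < lam) (N : ℕ) (hN : 2 ≤ N)
    (m p pN GN : ℝ)
    (hm : m = Real.tanh x / x)
    (hp : p = (1 - Real.tanh x ^ 2 + m) / 2)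
    (hpN : pN = p + (1 - p) / N)
    (hGN : GN = Real.log (1 + pN * (Real.exp (N * lam) - 1))) :
    pN * lam < Real.log (1 + pN * (Real.exp lam - 1)) ∧
    Real.log (1 + pN * (Real.exp lam - 1)) < GN / N ∧
    GN / N < pN * lam + (1 - pN) * N * lam ^ 2 / 2 := by
  have hN1 : (1 : ℝ) < N := by exact_mod_cast hN
  have hN0 : (0 : ℝ) < N := zero_lt_one.trans hN1
  have hp01 : p ∈ Ioo 0 1 := hp ▸ hm ▸ one_sub_tanh_sq_add_tanh_div_self_div_two_mem_Ioo hx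
  obtain ⟨hpN0, hpN1⟩ : pN ∈ Ioo 0 1 := hpN ▸ add_one_sub_div_mem_Ioo hp01 hN1
  refine ⟨mul_lt_log_one_add_mul_exp_sub_one hpN0 hpN1 hlam.ne', ?_, ?_⟩
  · have hpos : 0 < 1 + pN * (exp lam - 1) := by nlinarith [exp_pos lam]
    rw [hGN, lt_div_iff₀ hN0, mul_comm, ← log_pow]
    exact log_lt_log (pow_pos hpos N) (one_add_mul_exp_sub_one_pow_lt hpN0 hpN1 hlam.ne' hN)
  · rw [hGN, div_lt_iff₀ hN0]
    calc log (1 + pN * (exp (N * lam) - 1))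
        < pN * (N * lam) + (1 - pN) * (N * lam) ^ 2 / 2 :=
          log_one_add_mul_exp_sub_one_lt hpN0.le hpN1 (mul_pos hN0 hlam)
      _ = (pN * lam + (1 - pN) * N * lam ^ 2 / 2) * N := by ring
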